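/- arXiv:1205.1396 — 3 statements merged into one kernel-verified Lean document; each statement's English description precedes it below -/
import Mathlib

section
/- For real numbers a, b, c, d with d² = 1 + 2abc − a² − b² − c², the product (bc − a + id)(ac − b + id)(ab − c + id) equals (1/2)·(1−a)(1−b)(1−c)·(1 + a + b + c − id)² as complex numbers. -/
open Complex

/- Put `e = i d`. The constraint on `d` becomes `e² = a² + b² + c² - 2abc - 1`, and modulo this
relation the identity is a polynomial identity valid in any commutative ring. -/

theorem two_mul_corner_product_eq {R : Type*} [CommRing R] (a b c e : R)
    (he : e ^ 2 = a ^ 2 + b ^ 2 + c ^ 2 - 2 * a * b * c - 1) :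
    2 * ((b * c - a + e) * (a * c - b + e) * (a * b - c + e))
      = (1 - a) * (1 - b) * (1 - c) * (1 + a + b + c - e) ^ 2 := by
  linear_combination
    (2 * e + 2 * (a * b + b * c + c * a - a - b - c) - (1 - a) * (1 - b) * (1 - c)) * he

/-- Factorization of the three-corner product for a spherical triangle:
`(bc - a + id)(ac - b + id)(ab - c + id) = ½(1-a)(1-b)(1-c)(1 + a + b + c - id)²`. -/
theorem spherical_triangle_product_factorization (a b c d : ℝ)
    (h : d ^ 2 = 1 + 2 * a * b * c - a ^ 2 - b ^ 2 - c ^ 2) :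
    ((b * c - a : ℂ) + d * I) * ((a * c - b : ℂ) + d * I) * ((a * b - c : ℂ) + d * I)
      = (1 / 2) * (1 - a : ℂ) * (1 - b : ℂ) * (1 - c : ℂ)
        * ((1 + a + b + c : ℂ) - d * I) ^ 2 := by
  have hd : ((d : ℂ) * I) ^ 2 = a ^ 2 + b ^ 2 + c ^ 2 - 2 * a * b * c - 1 := by
    have hC : (d : ℂ) ^ 2 = 1 + 2 * a * b * c - a ^ 2 - b ^ 2 - c ^ 2 := by exact_mod_cast h
    rw [mul_pow, I_sq, hC]
    ring
  linear_combination (1 / 2 : ℂ) * two_mul_corner_product_eq (a : ℂ) b c (d * I) hd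
end

section
/- For θ ∈ (0, π/2) and γ ∈ [0, θ), the function Ω(θ, γ) = 2(arccos(sinγ/sinθ) − cosθ·arccos(tanγ/tanθ)) satisfies 0 ≤ Ω(θ, γ) ≤ 2π(1 − cosθ), and Ω(θ, γ) → 0 as γ → θ. -/
/-!
The map `γ ↦ Ω(θ, γ)` is continuous and antitone on `[-θ, θ]`: its derivative is
`2 (cos² θ - cos² γ) / (cos γ · √(sin² θ - sin² γ)) ≤ 0`. At the endpoints the arguments of both
`arccos`s are `±1`, so `Ω(θ, θ) = 0` and `Ω(θ, -θ) = 2π(1 - cos θ)` (the whole cone), which gives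
both bounds; continuity at `γ = θ` gives the limit.
-/

open Real Set

noncomputable def capSegmentAngle (θ γ : ℝ) : ℝ :=
  2 * (arccos (sin γ / sin θ) - cos θ * arccos (tan γ / tan θ))

lemma capSegmentAngle_self {θ : ℝ} (hsin : sin θ ≠ 0) (htan : tan θ ≠ 0) :
    capSegmentAngle θ θ = 0 := by
  simp [capSegmentAngle, div_self hsin, div_self htan]

lemma capSegmentAngle_neg_self {θ : ℝ} (hsin : sin θ ≠ 0) (htan : tan θ ≠ 0) :
    capSegmentAngle θ (-θ) = 2 * π * (1 - cos θ) := by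
  simp only [capSegmentAngle, sin_neg, tan_neg, neg_div, div_self hsin, div_self htan,
    arccos_neg_one]
  ring

lemma continuousAt_capSegmentAngle {θ γ : ℝ} (hγ : cos γ ≠ 0) :
    ContinuousAt (capSegmentAngle θ) γ := by
  unfold capSegmentAngle
  have htan : ContinuousAt tan γ := continuousAt_tan.mpr hγ
  fun_prop

lemma sqrt_one_sub_div_sq {a b : ℝ} (hb : 0 < b) : √(1 - (a / b) ^ 2) = √(b ^ 2 - a ^ 2) / b := by
  rw [show 1 - (a / b) ^ 2 = (b ^ 2 - a ^ 2) / b ^ 2 by field_simp, sqrt_div' _ (sq_nonneg b),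
    sqrt_sq hb.le]

lemma one_sub_sq_tan_div_tan {θ γ : ℝ} (hsθ : sin θ ≠ 0) (hcγ : cos γ ≠ 0) :
    1 - (tan γ / tan θ) ^ 2 = (sin θ ^ 2 - sin γ ^ 2) / (sin θ * cos γ) ^ 2 := by
  rw [tan_eq_sin_div_cos, tan_eq_sin_div_cos]
  field_simp
  linear_combination sin θ ^ 2 * sin_sq_add_cos_sq γ - sin γ ^ 2 * sin_sq_add_cos_sq θ

lemma hasDerivAt_capSegmentAngle {θ γ : ℝ} (hθ : θ < π / 2) (hγ : γ ∈ Ioo (-θ) θ) :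
    HasDerivAt (capSegmentAngle θ)
      (2 * ((cos θ ^ 2 - cos γ ^ 2) / (cos γ * √(sin θ ^ 2 - sin γ ^ 2)))) γ := by
  obtain ⟨hγl, hγr⟩ := hγ
  have hsθ : 0 < sin θ := sin_pos_of_pos_of_lt_pi (by linarith) (by linarith [pi_pos])
  have hcγ : 0 < cos γ := cos_pos_of_mem_Ioo ⟨by linarith, by linarith⟩
  have htθ : 0 < tan θ := tan_pos_of_pos_of_lt_pi_div_two (by linarith) hθ
  have hsin_lt : sin γ < sin θ := sin_lt_sin_of_lt_of_le_pi_div_two (by linarith) hθ.le hγr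
  have hsin_gt : -sin θ < sin γ := by
    rw [← sin_neg]; exact sin_lt_sin_of_lt_of_le_pi_div_two (by linarith) (by linarith) hγl
  have htan_lt : tan γ < tan θ := tan_lt_tan_of_lt_of_lt_pi_div_two (by linarith) hθ hγr
  have htan_gt : -tan θ < tan γ := by
    rw [← tan_neg]; exact tan_lt_tan_of_lt_of_lt_pi_div_two (by linarith) (by linarith) hγl
  have hs : sin γ / sin θ ∈ Ioo (-1) 1 :=
    ⟨by rwa [lt_div_iff₀ hsθ, neg_one_mul], by rwa [div_lt_one hsθ]⟩
  have ht : tan γ / tan θ ∈ Ioo (-1) 1 :=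
    ⟨by rwa [lt_div_iff₀ htθ, neg_one_mul], by rwa [div_lt_one htθ]⟩
  have dA := (hasDerivAt_arccos hs.1.ne' hs.2.ne).comp γ ((hasDerivAt_sin γ).div_const (sin θ))
  have dB := (hasDerivAt_arccos ht.1.ne' ht.2.ne).comp γ
    ((hasDerivAt_tan hcγ.ne').div_const (tan θ))
  refine ((dA.sub (dB.const_mul (cos θ))).const_mul 2).congr_deriv ?_
  rw [sqrt_one_sub_div_sq hsθ, one_sub_sq_tan_div_tan hsθ.ne' hcγ.ne',
    sqrt_div' _ (sq_nonneg _), sqrt_sq (by positivity), tan_eq_sin_div_cos θ]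
  field_simp
  ring

lemma antitoneOn_capSegmentAngle {θ : ℝ} (hθ : θ < π / 2) :
    AntitoneOn (capSegmentAngle θ) (Icc (-θ) θ) := by
  refine antitoneOn_of_hasDerivWithinAt_nonpos (convex_Icc _ _)
    (fun γ hγ => (continuousAt_capSegmentAngle
      (cos_pos_of_mem_Ioo ⟨by linarith [hγ.1], by linarith [hγ.2]⟩).ne').continuousWithinAt)
    (fun γ hγ => (hasDerivAt_capSegmentAngle hθ (by rwa [interior_Icc] at hγ)).hasDerivWithinAt)
    fun γ hγ => ?_
  rw [interior_Icc] at hγ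
  have hcγ : 0 < cos γ := cos_pos_of_mem_Ioo ⟨by linarith [hγ.1], by linarith [hγ.2]⟩
  have hcos : cos θ ≤ cos γ := by
    rw [← cos_abs γ]
    exact cos_le_cos_of_nonneg_of_le_pi (abs_nonneg γ) (by linarith [pi_pos]) (abs_le.mpr
      ⟨hγ.1.le, hγ.2.le⟩)
  have hcθ : 0 < cos θ := cos_pos_of_mem_Ioo ⟨by linarith [hγ.1, hγ.2], hθ⟩
  have hnum : cos θ ^ 2 - cos γ ^ 2 ≤ 0 := by nlinarith
  have hden : 0 ≤ cos γ * √(sin θ ^ 2 - sin γ ^ 2) := by positivity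
  linarith [div_nonpos_of_nonpos_of_nonneg hnum hden]

/-- Bounds and limit of the cap-segment solid angle
`Ω(θ, γ) = 2(arccos(sin γ/sin θ) - cos θ · arccos(tan γ/tan θ))`:
it lies in `[0, 2π(1 - cos θ)]` on `γ ∈ [0, θ)` and tends to `0` as `γ → θ⁻`. -/
theorem cap_segment_bounds_and_limit (θ : ℝ) (hθ : θ ∈ Set.Ioo 0 (π / 2)) :
    (∀ γ ∈ Set.Ico (0 : ℝ) θ,
      0 ≤ 2 * (Real.arccos (Real.sin γ / Real.sin θ)
            - Real.cos θ * Real.arccos (Real.tan γ / Real.tan θ)) ∧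
      2 * (Real.arccos (Real.sin γ / Real.sin θ)
            - Real.cos θ * Real.arccos (Real.tan γ / Real.tan θ))
        ≤ 2 * π * (1 - Real.cos θ)) ∧
    Filter.Tendsto (fun γ : ℝ =>
        2 * (Real.arccos (Real.sin γ / Real.sin θ)
          - Real.cos θ * Real.arccos (Real.tan γ / Real.tan θ)))
      (nhdsWithin θ (Set.Iio θ)) (nhds 0) := by
  obtain ⟨hθ0, hθ2⟩ := hθ
  have hsin : sin θ ≠ 0 := (sin_pos_of_pos_of_lt_pi hθ0 (by linarith [pi_pos])).ne'
  have htan : tan θ ≠ 0 := (tan_pos_of_pos_of_lt_pi_div_two hθ0 hθ2).ne'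
  have hanti := antitoneOn_capSegmentAngle hθ2
  refine ⟨fun γ ⟨hγ0, hγθ⟩ => ?_, ?_⟩
  · have hγ : γ ∈ Icc (-θ) θ := ⟨by linarith, hγθ.le⟩
    exact ⟨(capSegmentAngle_self hsin htan).symm.trans_le
        (hanti hγ ⟨by linarith, le_rfl⟩ hγθ.le),
      (hanti ⟨le_rfl, by linarith⟩ hγ (by linarith)).trans_eq
        (capSegmentAngle_neg_self hsin htan)⟩
  · have hlim := (continuousAt_capSegmentAngle (θ := θ)
      (cos_pos_of_mem_Ioo ⟨by linarith, hθ2⟩).ne').tendsto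
    rw [capSegmentAngle_self hsin htan] at hlim
    exact hlim.mono_left nhdsWithin_le_nhds
end

section
/- Let θ₁, θ₂ ∈ (0, π/2) with θ₁ + θ₂ < π and α ∈ (0, π), and define tanγ₁ = (cosθ₂ − cosα·cosθ₁)/(sinα·cosθ₁) with γ₁ ∈ (−π/2, π/2). If α ≥ θ₁ + θ₂ (cones with disjoint interiors) then γ₁ ≥ θ₁; if α ≤ |θ₁ − θ₂| with θ₂ ≥ θ₁ (cone 1 inside cone 2) then γ₁ ≤ −θ₁. -/
/-!
Clearing the positive denominator `sin α cos θ₁`, the addition formulas give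
`tan γ₁ - tan θ₁ = (cos θ₂ - cos (α - θ₁)) / (sin α cos θ₁)` and
`tan γ₁ + tan θ₁ = (cos θ₂ - cos (α + θ₁)) / (sin α cos θ₁)`.
In the disjoint case `0 < θ₂ ≤ α - θ₁ < π`, in the nested case `0 < α + θ₁ ≤ θ₂ < π`, so
monotonicity of `cos` on `[0, π]` fixes the sign of the numerator, and monotonicity of `tan`
on `(-π/2, π/2)` turns the comparison of tangents into one of angles.
-/

open Real

section

/-- The paper's `tan γ₁`. -/
noncomputable def coneTan (α θ₁ θ₂ : ℝ) : ℝ :=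
  (cos θ₂ - cos α * cos θ₁) / (sin α * cos θ₁)

variable {α θ₁ θ₂ : ℝ}

theorem tan_le_coneTan_iff (hα : 0 < sin α) (hθ₁ : 0 < cos θ₁) :
    tan θ₁ ≤ coneTan α θ₁ θ₂ ↔ cos (α - θ₁) ≤ cos θ₂ := by
  rw [coneTan, tan_eq_sin_div_cos, div_le_div_iff₀ hθ₁ (mul_pos hα hθ₁), cos_sub,
    ← sub_nonneg, ← sub_nonneg (a := cos θ₂)]
  have : (cos θ₂ - cos α * cos θ₁) * cos θ₁ - sin θ₁ * (sin α * cos θ₁)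
      = (cos θ₂ - (cos α * cos θ₁ + sin α * sin θ₁)) * cos θ₁ := by ring
  rw [this, mul_nonneg_iff_of_pos_right hθ₁]

theorem coneTan_le_neg_tan_iff (hα : 0 < sin α) (hθ₁ : 0 < cos θ₁) :
    coneTan α θ₁ θ₂ ≤ -tan θ₁ ↔ cos θ₂ ≤ cos (α + θ₁) := by
  rw [coneTan, tan_eq_sin_div_cos, ← neg_div, div_le_div_iff₀ (mul_pos hα hθ₁) hθ₁, cos_add,
    ← sub_nonneg, ← sub_nonneg (b := cos θ₂)]
  have : -sin θ₁ * (sin α * cos θ₁) - (cos θ₂ - cos α * cos θ₁) * cos θ₁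
      = (cos α * cos θ₁ - sin α * sin θ₁ - cos θ₂) * cos θ₁ := by ring
  rw [this, mul_nonneg_iff_of_pos_right hθ₁]

end

theorem cone_intersection_degenerate_cases_general (α θ₁ θ₂ γ₁ : ℝ)
    (hθ₁ : θ₁ ∈ Set.Ioo 0 (π / 2)) (hθ₂ : θ₂ ∈ Set.Ioo 0 (π / 2))
    (hα : α ∈ Set.Ioo 0 π)
    (hγ₁ : γ₁ ∈ Set.Ioo (-(π / 2)) (π / 2))
    (htan : Real.tan γ₁
      = (Real.cos θ₂ - Real.cos α * Real.cos θ₁) / (Real.sin α * Real.cos θ₁)) :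
    (θ₁ + θ₂ ≤ α → θ₁ ≤ γ₁) ∧ (θ₁ ≤ θ₂ → α ≤ θ₂ - θ₁ → γ₁ ≤ -θ₁) := by
  obtain ⟨hθ₁0, hθ₁π⟩ := hθ₁
  obtain ⟨hθ₂0, hθ₂π⟩ := hθ₂
  obtain ⟨hα0, hαπ⟩ := hα
  have hsinα : 0 < sin α := sin_pos_of_pos_of_lt_pi hα0 hαπ
  have hcosθ₁ : 0 < cos θ₁ := cos_pos_of_mem_Ioo ⟨by linarith, hθ₁π⟩
  have hθ₁mem : θ₁ ∈ Set.Ioo (-(π / 2)) (π / 2) := ⟨by linarith, hθ₁π⟩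
  have hnegθ₁mem : -θ₁ ∈ Set.Ioo (-(π / 2)) (π / 2) := ⟨by linarith, by linarith⟩
  change tan γ₁ = coneTan α θ₁ θ₂ at htan
  refine ⟨fun hdisjoint => ?_, fun _ hnested => ?_⟩
  · rw [← strictMonoOn_tan.le_iff_le hθ₁mem hγ₁, htan, tan_le_coneTan_iff hsinα hcosθ₁]
    exact cos_le_cos_of_nonneg_of_le_pi hθ₂0.le (by linarith) (by linarith)
  · rw [← strictMonoOn_tan.le_iff_le hγ₁ hnegθ₁mem, htan, tan_neg,
      coneTan_le_neg_tan_iff hsinα hcosθ₁]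
    exact cos_le_cos_of_nonneg_of_le_pi (by linarith) (by linarith) (by linarith)

/-- Degenerate configurations of two intersecting cones: if the cones have
disjoint interiors (`α ≥ θ₁ + θ₂`) then `γ₁ ≥ θ₁`; if cone 1 lies inside cone 2
(`α ≤ θ₂ - θ₁` with `θ₁ ≤ θ₂`) then `γ₁ ≤ -θ₁`. -/
theorem cone_intersection_degenerate_cases (α θ₁ θ₂ γ₁ : ℝ)
    (hθ₁ : θ₁ ∈ Set.Ioo 0 (π / 2)) (hθ₂ : θ₂ ∈ Set.Ioo 0 (π / 2))
    (hθθ : θ₁ + θ₂ < π) (hα : α ∈ Set.Ioo 0 π)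
    (hγ₁ : γ₁ ∈ Set.Ioo (-(π / 2)) (π / 2))
    (htan : Real.tan γ₁
      = (Real.cos θ₂ - Real.cos α * Real.cos θ₁) / (Real.sin α * Real.cos θ₁)) :
    (θ₁ + θ₂ ≤ α → θ₁ ≤ γ₁) ∧ (θ₁ ≤ θ₂ → α ≤ θ₂ - θ₁ → γ₁ ≤ -θ₁) :=
  cone_intersection_degenerate_cases_general α θ₁ θ₂ γ₁ hθ₁ hθ₂ hα hγ₁ htan
end
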